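/- arXiv:1501.01751 — 3 statements merged into one kernel-verified Lean document; each statement's English description precedes it below -/
import Mathlib

section
/- Let X be an irreducible sofic shift, π: X → Y a finite-to-one factor code of degree d_π, ν a fully supported ergodic shift-invariant measure on Y, and λ a degree joining over ν. Then the set {p_i λ : 1 ≤ i ≤ d_π} of coordinate marginals of λ is exactly the set of all ergodic shift-invariant measures μ on X with πμ = ν. -/
open MeasureTheory Set Filter Topology
open scoped ENNReal NNReal

/-- The shift map on the full shift `A^ℤ`. -/
def shiftMap {A : Type*} : (ℤ → A) → ℤ → A := fun x i => x (i + 1)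

/-- The inverse shift map. -/
def shiftInvMap {A : Type*} : (ℤ → A) → ℤ → A := fun x i => x (i - 1)

/-- The coordinatewise shift on `n`-tuples of points of the full shift. -/
def prodShift {A : Type*} {n : ℕ} : (Fin n → ℤ → A) → Fin n → ℤ → A :=
  fun x i => shiftMap (x i)

/-- A map between full shifts is a sliding block code if it is given by a local block map. -/
def IsSlidingBlockCode {A B : Type*} (π : (ℤ → A) → ℤ → B) : Prop :=
  ∃ (r : ℕ) (Φ : (Fin (2 * r + 1) → A) → B),
    ∀ x i, π x i = Φ fun j => x (i + (j : ℤ) - (r : ℤ))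

/-- A subset of the full shift is a shift of finite type if it is the set of points
avoiding a (finite) set of forbidden words of some fixed length `N` (and is nonempty). -/
def IsSFT {A : Type*} (X : Set (ℤ → A)) : Prop :=
  X.Nonempty ∧ ∃ (N : ℕ) (F : Set (Fin N → A)),
    X = {x | ∀ k : ℤ, (fun i : Fin N => x (k + (i : ℤ))) ∉ F}

/-- A sofic shift: the image of an SFT under a sliding block code. -/
def IsSofic {A : Type*} (X : Set (ℤ → A)) : Prop :=
  ∃ (m : ℕ) (Z : Set (ℤ → Fin m)) (φ : (ℤ → Fin m) → ℤ → A),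
    IsSFT Z ∧ IsSlidingBlockCode φ ∧ φ '' Z = X

/-- A word occurs in the shift space `X`. -/
def WordIn {A : Type*} (X : Set (ℤ → A)) {n : ℕ} (w : Fin n → A) : Prop :=
  ∃ x ∈ X, ∃ k : ℤ, ∀ i : Fin n, x (k + (i : ℤ)) = w i

/-- Irreducibility: any two words occurring in `X` can be seen in a single point of `X`,
with the first strictly to the left of the second (equivalently, `u w v` occurs in `X`). -/
def IsIrreducibleShift {A : Type*} (X : Set (ℤ → A)) : Prop :=
  ∀ {m n : ℕ} (u : Fin m → A) (v : Fin n → A), WordIn X u → WordIn X v →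
    ∃ x ∈ X, ∃ i j : ℤ, i + (m : ℤ) ≤ j ∧ (∀ a : Fin m, x (i + (a : ℤ)) = u a) ∧
      ∀ b : Fin n, x (j + (b : ℤ)) = v b

/-- `π` is a factor code from `X` onto `Y`: a sliding block code mapping `X` onto `Y`. -/
def IsFactorCodeOn {A B : Type*} (π : (ℤ → A) → ℤ → B) (X : Set (ℤ → A))
    (Y : Set (ℤ → B)) : Prop :=
  IsSlidingBlockCode π ∧ π '' X = Y

/-- A point of `Y` is doubly transitive if its forward and backward orbits are dense in `Y`. -/
def DoublyTransitiveIn {B : Type*} [TopologicalSpace B] (Y : Set (ℤ → B)) (y : ℤ → B) : Prop :=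
  y ∈ Y ∧ Y ⊆ closure {z | ∃ n : ℕ, z = shiftMap^[n] y} ∧
    Y ⊆ closure {z | ∃ n : ℕ, z = shiftInvMap^[n] y}

/-- The measure `μ` has full topological support on the shift space `X`:
every open set meeting `X` has positive measure. -/
def FullSupportOn {A : Type*} [TopologicalSpace A] [MeasurableSpace A]
    (μ : Measure (ℤ → A)) (X : Set (ℤ → A)) : Prop :=
  ∀ U : Set (ℤ → A), IsOpen U → (U ∩ X).Nonempty → 0 < μ U

/-- An `n`-fold `π`-relative joining supported on tuples from `X` with equal `π`-images. -/
def IsRelJoining {A B : Type*} [MeasurableSpace A] (X : Set (ℤ → A))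
    (π : (ℤ → A) → ℤ → B) {n : ℕ} (lam : Measure (Fin n → ℤ → A)) : Prop :=
  IsProbabilityMeasure lam ∧ MeasurePreserving prodShift lam lam ∧
    lam {x | (∀ i, x i ∈ X) ∧ ∀ i j, π (x i) = π (x j)} = 1

/-- A relative joining over `ν`: all the `π`-images of the marginals are `ν`. -/
def IsRelJoiningOver {A B : Type*} [MeasurableSpace A] [MeasurableSpace B]
    (X : Set (ℤ → A)) (π : (ℤ → A) → ℤ → B) (ν : Measure (ℤ → B)) {n : ℕ}
    (lam : Measure (Fin n → ℤ → A)) : Prop :=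
  IsRelJoining X π lam ∧ ∀ i : Fin n, lam.map (fun x => π (x i)) = ν

/-- A relative joining is separating if a.e. tuple has pairwise distinct coordinates. -/
def IsSeparating {A : Type*} [MeasurableSpace A] {n : ℕ}
    (lam : Measure (Fin n → ℤ → A)) : Prop :=
  lam {x | ∀ i j : Fin n, i ≠ j → x i ≠ x j} = 1

/-- A degree joining over `ν`: an ergodic `d`-fold separating relative joining over `ν`. -/
def IsDegreeJoining {A B : Type*} [MeasurableSpace A] [MeasurableSpace B]
    (X : Set (ℤ → A)) (π : (ℤ → A) → ℤ → B) (ν : Measure (ℤ → B)) (d : ℕ)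
    (lam : Measure (Fin d → ℤ → A)) : Prop :=
  Ergodic prodShift lam ∧ IsRelJoiningOver X π ν lam ∧ IsSeparating lam

/-- `x` is a generic point for the invariant measure `μ`: ergodic averages of every
continuous function converge to the integral. -/
def GenericFor {A : Type*} [TopologicalSpace A] [MeasurableSpace A] (x : ℤ → A)
    (μ : Measure (ℤ → A)) : Prop :=
  ∀ f : C(ℤ → A, ℝ),
    Tendsto (fun n : ℕ => (∑ k ∈ Finset.range n, f (shiftMap^[k] x)) / (n : ℝ))
      atTop (𝓝 (∫ z, f z ∂μ))

variable {A B : Type*} [Fintype A] [Fintype B]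
  [TopologicalSpace A] [DiscreteTopology A] [MeasurableSpace A] [BorelSpace A]
  [TopologicalSpace B] [DiscreteTopology B] [MeasurableSpace B] [BorelSpace B]


/-!
Distinct ergodic measures are mutually singular, so it suffices to dominate an ergodic lift `μ`
of `ν` by the sum of the marginals of `λ` on compact subsets of `X`. Since `ν`-almost every point
is doubly transitive, its fibre has exactly `d` points, and since `λ` is a separating relative
joining, `λ`-almost every tuple enumerates the whole fibre over its common image. Hence for
compact `K ⊆ X`,
  `μ K ≤ ν (π K) = λ {t | π (t i₀) ∈ π K} ≤ λ {t | ∃ i, t i ∈ K} ≤ ∑ i, (p_i λ) K`,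
and inner regularity of `μ` rules out `μ` being singular to every marginal. Conversely each
marginal is an ergodic lift of `ν`, being a factor of the ergodic joining `λ`.
-/
section ShiftTopology

variable {α β : Type*} [TopologicalSpace α] [DiscreteTopology α]

theorem IsSlidingBlockCode.continuous [TopologicalSpace β] {π : (ℤ → α) → ℤ → β}
    (h : IsSlidingBlockCode π) : Continuous π := by
  obtain ⟨r, Φ, hΦ⟩ := h
  refine continuous_pi fun i => ?_
  simp only [hΦ]
  exact continuous_of_discreteTopology.comp (continuous_pi fun j => continuous_apply _)

theorem IsSFT.isClosed {X : Set (ℤ → α)} (h : IsSFT X) : IsClosed X := by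
  obtain ⟨-, N, F, rfl⟩ := h
  simp only [ofPred_forall]
  exact isClosed_iInter fun k => (isClosed_discrete Fᶜ).preimage
    (f := fun x : ℤ → α => fun i : Fin N => x (k + i)) (continuous_pi fun i => continuous_apply _)

end ShiftTopology

theorem IsSofic.isCompact {α : Type*} [TopologicalSpace α] {X : Set (ℤ → α)} (h : IsSofic X) :
    IsCompact X := by
  obtain ⟨m, Z, φ, hZ, hφ, rfl⟩ := h
  exact hZ.isClosed.isCompact.image hφ.continuous

namespace Ergodic

variable {α : Type*} [MeasurableSpace α] {f : α → α} {μ : Measure α}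

theorem eq_or_mutuallySingular {μ' : Measure α} [IsProbabilityMeasure μ]
    [IsProbabilityMeasure μ'] (hμ : Ergodic f μ) (hμ' : Ergodic f μ') : μ = μ' ∨ μ ⟂ₘ μ' := by
  -- The singular part of `μ` with respect to `μ'` is invariant and dominated by `μ`.
  obtain ⟨c, hc⟩ := hμ.eq_smul_of_absolutelyContinuous
    (hμ.toMeasurePreserving.singularPart hμ'.toMeasurePreserving)
    (Measure.absolutelyContinuous_of_le (μ.singularPart_le μ'))
  rcases eq_or_ne c 0 with rfl | hc0
  · rw [zero_smul, Measure.singularPart_eq_zero] at hc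
    exact .inl (hμ'.eq_of_absolutelyContinuous hμ.toMeasurePreserving hc)
  · have hsing := μ.mutuallySingular_singularPart μ'
    rw [hc] at hsing
    exact .inr (hsing.mono_ac (Measure.absolutelyContinuous_smul hc0) .rfl)

theorem ae_exists_iterate_mem [IsFiniteMeasure μ] (hf : Ergodic f μ) {U : Set α}
    (hU : MeasurableSet U) (hμU : μ U ≠ 0) : ∀ᵐ y ∂μ, ∃ n : ℕ, f^[n] y ∈ U := by
  set V := {y | ∃ n : ℕ, f^[n] y ∈ U}
  have hV : MeasurableSet V := by
    simp only [V, ofPred_exists]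
    exact .iUnion fun n => hf.measurable.iterate n hU
  have hfV : f ⁻¹' V ⊆ V := by
    rintro y ⟨n, hn⟩
    exact ⟨n + 1, by rwa [Function.iterate_succ_apply]⟩
  rcases hf.ae_empty_or_univ_of_preimage_ae_le hV.nullMeasurableSet hfV.eventuallyLE
    with hempty | huniv
  · have hUV : U ⊆ V := fun y hy => ⟨0, hy⟩
    exact absurd (measure_mono_null hUV (ae_eq_empty.mp hempty)) hμU
  · exact ae_eq_univ.mp huniv

theorem ae_subset_closure_orbit [TopologicalSpace α] [SecondCountableTopology α]
    [OpensMeasurableSpace α] [IsFiniteMeasure μ] (hf : Ergodic f μ) {Y : Set α}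
    (hY : ∀ U, IsOpen U → (U ∩ Y).Nonempty → 0 < μ U) :
    ∀ᵐ y ∂μ, Y ⊆ closure {z | ∃ n : ℕ, z = f^[n] y} := by
  open TopologicalSpace in
  have hvisit : ∀ᵐ y ∂μ, ∀ U ∈ {U ∈ countableBasis α | (U ∩ Y).Nonempty},
      ∃ n : ℕ, f^[n] y ∈ U := by
    rw [ae_ball_iff ((countable_countableBasis α).mono (sep_subset _ _))]
    intro U ⟨hU, hUY⟩
    have hUo := isOpen_of_mem_countableBasis hU
    exact hf.ae_exists_iterate_mem hUo.measurableSet (hY U hUo hUY).ne'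
  filter_upwards [hvisit] with y hy z hz
  rw [mem_closure_iff]
  intro V hV hzV
  obtain ⟨U, hU, hzU, hUV⟩ :=
    (TopologicalSpace.isBasis_countableBasis α).exists_subset_of_mem_open hzV hV
  obtain ⟨n, hn⟩ := hy U ⟨hU, z, hzU, hz⟩
  exact ⟨_, hUV hn, n, rfl⟩

end Ergodic

def shiftMeasurableEquiv {α : Type*} [MeasurableSpace α] : (ℤ → α) ≃ᵐ (ℤ → α) where
  toFun := shiftMap
  invFun := shiftInvMap
  left_inv x := by funext i; simp [shiftMap, shiftInvMap]
  right_inv x := by funext i; simp [shiftMap, shiftInvMap]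
  measurable_toFun := measurable_pi_lambda _ fun i => measurable_pi_apply (i + 1)
  measurable_invFun := measurable_pi_lambda _ fun i => measurable_pi_apply (i - 1)

theorem ae_doublyTransitiveIn {β : Type*} [TopologicalSpace β] [SecondCountableTopology β]
    [MeasurableSpace β] [OpensMeasurableSpace β] {Y : Set (ℤ → β)} (hY : MeasurableSet Y)
    {ν : Measure (ℤ → β)} [IsProbabilityMeasure ν] (hν : Ergodic shiftMap ν) (hνY : ν Y = 1)
    (hνfull : FullSupportOn ν Y) : ∀ᵐ y ∂ν, DoublyTransitiveIn Y y := by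
  have hνinv : Ergodic shiftInvMap ν := Ergodic.symm (e := shiftMeasurableEquiv) hν
  have hYae : ∀ᵐ y ∂ν, y ∈ Y :=
    (ae_iff_measure_eq hY.nullMeasurableSet).2 (hνY.trans measure_univ.symm)
  filter_upwards [hYae, hν.ae_subset_closure_orbit hνfull, hνinv.ae_subset_closure_orbit hνfull]
    with y hyY hfwd hbwd
  exact ⟨hyY, hfwd, hbwd⟩

def IsErgodicLift {α β : Type*} [MeasurableSpace α] [MeasurableSpace β] (X : Set (ℤ → α))
    (π : (ℤ → α) → ℤ → β) (ν : Measure (ℤ → β)) (μ : Measure (ℤ → α)) : Prop :=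
  IsProbabilityMeasure μ ∧ Ergodic shiftMap μ ∧ μ X = 1 ∧ μ.map π = ν

theorem IsRelJoiningOver.isErgodicLift_map_eval {α β : Type*} [MeasurableSpace α]
    [MeasurableSpace β] {X : Set (ℤ → α)} {π : (ℤ → α) → ℤ → β} {ν : Measure (ℤ → β)} {n : ℕ}
    {lam : Measure (Fin n → ℤ → α)} (hlam : IsRelJoiningOver X π ν lam)
    (herg : Ergodic prodShift lam) (hπ : Measurable π) (i : Fin n) :
    IsErgodicLift X π ν (lam.map fun t => t i) := by
  obtain ⟨⟨hprob, -, hsupp⟩, hmarg⟩ := hlam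
  have heval : MeasurePreserving (fun t : Fin n → ℤ → α => t i) lam (lam.map fun t => t i) :=
    ⟨measurable_pi_apply i, rfl⟩
  refine ⟨Measure.isProbabilityMeasure_map heval.measurable.aemeasurable,
    heval.ergodic_of_ergodic_semiconj herg shiftMeasurableEquiv.measurable fun _ => rfl,
    le_antisymm prob_le_one ?_, ?_⟩
  · calc 1 = lam {t | (∀ j, t j ∈ X) ∧ ∀ j k, π (t j) = π (t k)} := hsupp.symm
      _ ≤ lam ((fun t => t i) ⁻¹' X) := measure_mono fun t ht => ht.1 i
      _ ≤ (lam.map fun t => t i) X := Measure.le_map_apply heval.measurable.aemeasurable X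
  · rw [Measure.map_map hπ heval.measurable]
    exact hmarg i

section Joinings

variable {α β : Type*} [TopologicalSpace α] [T2Space α] [SecondCountableTopology α]
  [MeasurableSpace α] [BorelSpace α] [TopologicalSpace β] [T2Space β] [SecondCountableTopology β]
  [MeasurableSpace β] [BorelSpace β]
  {X : Set (ℤ → α)} {π : (ℤ → α) → ℤ → β} {ν : Measure (ℤ → β)} {n : ℕ}
  {lam : Measure (Fin n → ℤ → α)}

theorem IsRelJoiningOver.ae_fiber_subset_range (hlam : IsRelJoiningOver X π ν lam)
    (hsep : IsSeparating lam) (hX : IsClosed X) (hπ : Continuous π)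
    (hfin : ∀ y, (X ∩ π ⁻¹' {y}).Finite)
    (hcard : ∀ᵐ y ∂ν, (X ∩ π ⁻¹' {y}).ncard = n) (i : Fin n) :
    ∀ᵐ t ∂lam, X ∩ π ⁻¹' {π (t i)} ⊆ range t := by
  obtain ⟨⟨hprob, -, hsupp⟩, hmarg⟩ := hlam
  have hsupp_closed :
      IsClosed {t : Fin n → ℤ → α | (∀ j, t j ∈ X) ∧ ∀ j k, π (t j) = π (t k)} := by
    simp only [ofPred_and, ofPred_forall]
    exact (isClosed_iInter fun j => hX.preimage (continuous_apply j)).inter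
      (isClosed_iInter fun j => isClosed_iInter fun k =>
        isClosed_eq (hπ.comp (continuous_apply j)) (hπ.comp (continuous_apply k)))
  have hsep_meas : MeasurableSet {t : Fin n → ℤ → α | ∀ j k, j ≠ k → t j ≠ t k} := by
    have : {t : Fin n → ℤ → α | ∀ j k, j ≠ k → t j ≠ t k} =
        ⋂ j, ⋂ k, ⋂ (_ : j ≠ k), {t | t j = t k}ᶜ := by
      ext; simp
    rw [this]
    exact .iInter fun j => .iInter fun k => .iInter fun _ =>
      (isClosed_eq (continuous_apply j) (continuous_apply k)).measurableSet.compl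
  have hsupp_ae : ∀ᵐ t ∂lam, (∀ j, t j ∈ X) ∧ ∀ j k, π (t j) = π (t k) :=
    (ae_iff_measure_eq hsupp_closed.measurableSet.nullMeasurableSet).2
      (hsupp.trans measure_univ.symm)
  have hsep_ae : ∀ᵐ t ∂lam, ∀ j k, j ≠ k → t j ≠ t k :=
    (ae_iff_measure_eq hsep_meas.nullMeasurableSet).2 (hsep.trans measure_univ.symm)
  have hcard_ae : ∀ᵐ t ∂lam, (X ∩ π ⁻¹' {π (t i)}).ncard = n := by
    rw [← hmarg i] at hcard
    exact ae_of_ae_map (hπ.comp (continuous_apply i)).measurable.aemeasurable hcard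
  filter_upwards [hsupp_ae, hsep_ae, hcard_ae] with t ⟨htX, htπ⟩ hsep hcard
  have hinj : Function.Injective t := fun j k h => by_contra fun hne => hsep j k hne h
  have hrange : range t ⊆ X ∩ π ⁻¹' {π (t i)} := by
    rintro _ ⟨j, rfl⟩
    exact ⟨htX j, htπ j i⟩
  refine (eq_of_subset_of_ncard_le hrange ?_ (hfin _)).ge
  rw [hcard, ncard_range_of_injective hinj, Nat.card_fin]

theorem measure_le_sum_map_eval_of_isCompact {μ : Measure (ℤ → α)} (hπ : Continuous π)
    (i : Fin n) (hfib : ∀ᵐ t ∂lam, X ∩ π ⁻¹' {π (t i)} ⊆ range t)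
    (hμ : μ.map π = lam.map fun t => π (t i)) {K : Set (ℤ → α)} (hK : IsCompact K)
    (hKX : K ⊆ X) : μ K ≤ ∑ j, (lam.map fun t => t j) K := by
  have hπK : MeasurableSet (π '' K) := (hK.image hπ).isClosed.measurableSet
  have hπi : Measurable fun t : Fin n → ℤ → α => π (t i) :=
    hπ.measurable.comp (measurable_pi_apply i)
  calc μ K ≤ μ (π ⁻¹' (π '' K)) := measure_mono (subset_preimage_image π K)
    _ = lam {t | π (t i) ∈ π '' K} := by
      rw [← Measure.map_apply hπ.measurable hπK, hμ, Measure.map_apply hπi hπK]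
      rfl
    _ ≤ lam (⋃ j, {t | t j ∈ K}) := by
      refine measure_mono_ae (hfib.mono fun t ht => ?_)
      rintro ⟨x, hxK, hx⟩
      obtain ⟨j, rfl⟩ := ht ⟨hKX hxK, hx⟩
      exact mem_iUnion.2 ⟨j, hxK⟩
    _ ≤ ∑ j, lam {t | t j ∈ K} := measure_iUnion_fintype_le _ _
    _ = ∑ j, (lam.map fun t => t j) K := Finset.sum_congr rfl fun j _ =>
      (Measure.map_apply (measurable_pi_apply j) hK.isClosed.measurableSet).symm

end Joinings

theorem Ergodic.exists_eq_of_le_sum_of_isCompact {α ι : Type*} [TopologicalSpace α]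
    [MeasurableSpace α] [Fintype ι] {f : α → α} {μ : Measure α} {ρ : ι → Measure α}
    [IsProbabilityMeasure μ] [∀ i, IsProbabilityMeasure (ρ i)] [μ.InnerRegularCompactLTTop]
    (hμ : Ergodic f μ) (hρ : ∀ i, Ergodic f (ρ i)) {X : Set α} (hX : MeasurableSet X)
    (hμX : μ X = 1) (hle : ∀ K, IsCompact K → K ⊆ X → μ K ≤ ∑ i, ρ i K) : ∃ i, μ = ρ i := by
  by_contra! hne
  choose s hs hμs hρs using fun i => (hμ.eq_or_mutuallySingular (hρ i)).resolve_left (hne i)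
  have hμT : μ (⋃ i, s i) = 0 := measure_iUnion_null hμs
  obtain ⟨K, hKsub, hK, hKpos⟩ := (hX.diff (.iUnion hs)).exists_lt_isCompact_of_ne_top
    (measure_ne_top _ _) (r := 0) (by rw [measure_sdiff_null hμT, hμX]; exact one_pos)
  have hρK : ∀ i, ρ i K = 0 := fun i =>
    measure_mono_null (fun x hx hxs => (hKsub hx).2 (mem_iUnion.2 ⟨i, hxs⟩)) (hρs i)
  have := hle K hK (hKsub.trans sdiff_subset)
  simp only [hρK, Finset.sum_const_zero, nonpos_iff_eq_zero] at this
  exact hKpos.ne' this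

theorem degree_joining_margins_general
    (X : Set (ℤ → A)) (Y : Set (ℤ → B)) (π : (ℤ → A) → ℤ → B)
    (hXsofic : IsSofic X)
    (hfc : IsFactorCodeOn π X Y)
    (hfto : ∀ y : ℤ → B, (X ∩ π ⁻¹' {y}).Finite)
    (d : ℕ) (hd : 0 < d)
    (hdeg : ∀ y, DoublyTransitiveIn Y y → (X ∩ π ⁻¹' {y}).ncard = d)
    (ν : Measure (ℤ → B)) [IsProbabilityMeasure ν]
    (hνerg : Ergodic shiftMap ν) (hνY : ν Y = 1) (hνfull : FullSupportOn ν Y)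
    (lam : Measure (Fin d → ℤ → A)) (hlam : IsDegreeJoining X π ν d lam) :
    {μ : Measure (ℤ → A) | ∃ i : Fin d, μ = lam.map fun x => x i} =
      {μ : Measure (ℤ → A) |
        IsProbabilityMeasure μ ∧ Ergodic shiftMap μ ∧ μ X = 1 ∧ μ.map π = ν} := by
  obtain ⟨hlamErg, hlamOver, hlamSep⟩ := hlam
  have hπ : Continuous π := hfc.1.continuous
  have hX : IsCompact X := hXsofic.isCompact
  have hY : MeasurableSet Y := hfc.2 ▸ (hX.image hπ).isClosed.measurableSet
  have hcard : ∀ᵐ y ∂ν, (X ∩ π ⁻¹' {y}).ncard = d :=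
    (ae_doublyTransitiveIn hY hνerg hνY hνfull).mono hdeg
  have hlift : ∀ i, IsErgodicLift X π ν (lam.map fun t => t i) :=
    hlamOver.isErgodicLift_map_eval hlamErg hπ.measurable
  ext μ
  refine ⟨by rintro ⟨i, rfl⟩; exact hlift i, fun ⟨hμprob, hμerg, hμX, hμπ⟩ => ?_⟩
  have : ∀ i, IsProbabilityMeasure (lam.map fun t => t i) := fun i => (hlift i).1
  let i₀ : Fin d := ⟨0, hd⟩
  have hfib := hlamOver.ae_fiber_subset_range hlamSep hX.isClosed hπ hfto hcard i₀
  exact hμerg.exists_eq_of_le_sum_of_isCompact (fun i => (hlift i).2.1)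
    hX.isClosed.measurableSet hμX fun K hK hKX =>
      measure_le_sum_map_eval_of_isCompact hπ i₀ hfib (hμπ.trans (hlamOver.2 i₀).symm) hK hKX

/-- The coordinate marginals of a degree joining over `ν` are exactly
the ergodic lifts of `ν`. -/
theorem degree_joining_margins
    (X : Set (ℤ → A)) (Y : Set (ℤ → B)) (π : (ℤ → A) → ℤ → B)
    (hXsofic : IsSofic X) (hXirr : IsIrreducibleShift X)
    (hfc : IsFactorCodeOn π X Y)
    (hfto : ∀ y : ℤ → B, (X ∩ π ⁻¹' {y}).Finite)
    (d : ℕ) (hd : 0 < d)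
    (hdeg : ∀ y, DoublyTransitiveIn Y y → (X ∩ π ⁻¹' {y}).ncard = d)
    (ν : Measure (ℤ → B)) [IsProbabilityMeasure ν]
    (hνerg : Ergodic shiftMap ν) (hνY : ν Y = 1) (hνfull : FullSupportOn ν Y)
    (lam : Measure (Fin d → ℤ → A)) (hlam : IsDegreeJoining X π ν d lam) :
    {μ : Measure (ℤ → A) | ∃ i : Fin d, μ = lam.map fun x => x i} =
      {μ : Measure (ℤ → A) |
        IsProbabilityMeasure μ ∧ Ergodic shiftMap μ ∧ μ X = 1 ∧ μ.map π = ν} :=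
  degree_joining_margins_general X Y π hXsofic hfc hfto d hd hdeg ν hνerg hνY hνfull lam hlam
end

section
/- Let π: X → Y be a Borel-measurable map between Polish spaces and let A ⊆ X be a Borel subset. Then the map F_A: Y → {0, 1, 2, …} ∪ {∞} defined by F_A(y) = |π⁻¹(y) ∩ A| is universally measurable. -/
/-!
For each `n`, the set of `y` whose fibre meets `A` in at least `n` points is the projection
of the Borel set of pairs `(y, v)` with `v` an injective `n`-tuple in `π ⁻¹' {y} ∩ A`, hence
analytic, and these super-level sets determine the fibre cardinality. Analytic sets are
universally measurable: for a continuous image `range f` of Baire space `ℕ → ℕ` and any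
`ε`, the coordinates can be bounded one at a time by `N 0, N 1, …` while losing at most `ε`
of measure, and what remains lies in the compact set `f '' univ.pi (Iic ∘ N)`.
-/

open MeasureTheory Set Filter
open scoped ENNReal Topology

theorem Monotone.exists_lt_measure_add {α : Type*} [MeasurableSpace α] {μ : Measure α}
    {s : ℕ → Set α} (hs : Monotone s) (hfin : μ (⋃ m, s m) ≠ ∞) {δ : ℝ≥0∞} (hδ : δ ≠ 0) :
    ∃ m, μ (⋃ m, s m) < μ (s m) + δ := by
  have hlt : μ (⋃ m, s m) < (⨆ m, μ (s m)) + δ := by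
    rw [← hs.measure_iUnion]; exact ENNReal.lt_add_right hfin hδ
  rwa [ENNReal.iSup_add, lt_iSup_iff] at hlt

theorem MeasureTheory.NullMeasurableSet.of_forall_exists_measurableSet_subset {α : Type*}
    [MeasurableSpace α] {μ : Measure α} {s : Set α} (hs : μ s ≠ ∞)
    (h : ∀ ε ≠ 0, ∃ t ⊆ s, MeasurableSet t ∧ μ s ≤ μ t + ε) : NullMeasurableSet s μ := by
  choose t hts ht hμt using fun n : ℕ =>
    h (n : ℝ≥0∞)⁻¹ (ENNReal.inv_ne_zero.2 (ENNReal.natCast_ne_top n))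
  have hdiff : ∀ n, μ (s \ t n) ≤ (n : ℝ≥0∞)⁻¹ := fun n => by
    have hfin : μ (t n) ≠ ∞ := ne_top_of_le_ne_top hs (measure_mono (hts n))
    rw [measure_sdiff (hts n) (ht n).nullMeasurableSet hfin, tsub_le_iff_left]
    exact hμt n
  have hnull : μ (s \ ⋃ n, t n) = 0 := by
    refine le_antisymm (ENNReal.le_of_forall_pos_le_add fun ε hε _ => ?_) bot_le
    obtain ⟨n, hn⟩ := ENNReal.exists_inv_nat_lt (ENNReal.coe_ne_zero.2 hε.ne')
    calc μ (s \ ⋃ n, t n) ≤ μ (s \ t n) :=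
          measure_mono (sdiff_subset_sdiff_right (subset_iUnion t n))
      _ ≤ 0 + ε := by rw [zero_add]; exact (hdiff n).trans hn.le
  rw [← union_sdiff_cancel (iUnion_subset hts)]
  exact (MeasurableSet.iUnion ht).nullMeasurableSet.union (NullMeasurableSet.of_null hnull)

def boundedPrefix (N : ℕ → ℕ) (k : ℕ) : Set (ℕ → ℕ) := {x | ∀ i < k, x i ≤ N i}

theorem boundedPrefix_zero (N : ℕ → ℕ) : boundedPrefix N 0 = univ := by
  simp [boundedPrefix]

theorem boundedPrefix_succ (N : ℕ → ℕ) (k : ℕ) :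
    boundedPrefix N (k + 1) = boundedPrefix N k ∩ {x | x k ≤ N k} := by
  ext x
  simp only [boundedPrefix, mem_ofPred_eq, mem_inter_iff, Nat.forall_lt_succ_right]

theorem boundedPrefix_antitone (N : ℕ → ℕ) : Antitone (boundedPrefix N) :=
  fun _ _ hkl _ hx i hi => hx i (hi.trans_le hkl)

theorem isCompact_pi_Iic (N : ℕ → ℕ) : IsCompact (univ.pi fun i => Iic (N i)) :=
  isCompact_univ_pi fun i => (finite_Iic (N i)).isCompact

theorem exists_tendsto_subseq_of_mem_boundedPrefix {N : ℕ → ℕ} {u : ℕ → ℕ → ℕ}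
    (hu : ∀ k, u k ∈ boundedPrefix N k) :
    ∃ x ∈ univ.pi (fun i => Iic (N i)), ∃ φ : ℕ → ℕ, StrictMono φ ∧
      Tendsto (u ∘ φ) atTop (𝓝 x) := by
  -- Clipping `u k` at `N` changes only coordinates `≥ k`, so it does not affect limits.
  set v : ℕ → ℕ → ℕ := fun k i => min (u k i) (N i)
  obtain ⟨x, hx, φ, hφ, hvφ⟩ := (isCompact_pi_Iic N).tendsto_subseq
    (x := v) fun k => mem_univ_pi.2 fun i => mem_Iic.2 (min_le_right _ _)
  refine ⟨x, hx, φ, hφ, tendsto_pi_nhds.2 fun i => (tendsto_pi_nhds.1 hvφ i).congr' ?_⟩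
  filter_upwards [eventually_gt_atTop i] with k hk
  exact min_eq_left (hu (φ k) i (hk.trans_le hφ.le_apply))

theorem Continuous.mem_image_pi_Iic_of_forall_mem_closure {Y : Type*} [TopologicalSpace Y]
    [FirstCountableTopology Y] [T2Space Y] {f : (ℕ → ℕ) → Y} (hf : Continuous f)
    {N : ℕ → ℕ} {y : Y} (hy : ∀ k, y ∈ closure (f '' boundedPrefix N k)) :
    y ∈ f '' univ.pi (fun i => Iic (N i)) := by
  obtain ⟨V, hV⟩ := (𝓝 y).exists_antitone_basis
  have hex : ∀ k, ∃ x ∈ boundedPrefix N k, f x ∈ V k := fun k => by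
    obtain ⟨_, hyV, x, hx, rfl⟩ := mem_closure_iff_nhds.1 (hy k) (V k) (hV.mem k)
    exact ⟨x, hx, hyV⟩
  choose u hu hfu using hex
  obtain ⟨x, hx, φ, hφ, hux⟩ := exists_tendsto_subseq_of_mem_boundedPrefix hu
  exact ⟨x, hx, tendsto_nhds_unique ((hf.tendsto x).comp hux)
    ((hV.tendsto hfu).comp hφ.tendsto_atTop)⟩

theorem exists_forall_measure_range_le_image_boundedPrefix_add {Y : Type*} [MeasurableSpace Y]
    (μ : Measure Y) [IsFiniteMeasure μ] (f : (ℕ → ℕ) → Y) {ε : ℝ≥0∞} (hε : ε ≠ 0) :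
    ∃ N : ℕ → ℕ, ∀ k, μ (range f) ≤ μ (f '' boundedPrefix N k) + ε := by
  obtain ⟨δ, hδ, hδε⟩ := ENNReal.exists_pos_sum_of_countable hε ℕ
  have hstep : ∀ (k : ℕ) (P : Set (ℕ → ℕ)), ∃ m,
      μ (f '' P) ≤ μ (f '' (P ∩ {x | x k ≤ m})) + δ k := fun k P => by
    have hunion : f '' P = ⋃ m, f '' (P ∩ {x | x k ≤ m}) := by
      rw [← image_iUnion, ← inter_iUnion,
        inter_eq_left.2 fun x _ => mem_iUnion.2 ⟨x k, mem_ofPred_eq ▸ le_rfl⟩]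
    have hmono : Monotone fun m => f '' (P ∩ {x | x k ≤ m}) :=
      fun _ _ hmn => image_mono (inter_subset_inter_right _ fun _ hx => le_trans hx hmn)
    obtain ⟨m, hm⟩ := hmono.exists_lt_measure_add (measure_ne_top μ _)
      (ENNReal.coe_ne_zero.2 (hδ k).ne')
    exact ⟨m, hunion ▸ hm.le⟩
  choose g hg using hstep
  -- The bounds are chosen one coordinate at a time, each losing at most `δ k` of measure.
  let P : ℕ → Set (ℕ → ℕ) := fun k => Nat.rec univ (fun k Pk => Pk ∩ {x | x k ≤ g k Pk}) k
  let N : ℕ → ℕ := fun k => g k (P k)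
  have hP : ∀ k, P k = boundedPrefix N k := fun k => by
    induction k with
    | zero => exact (boundedPrefix_zero N).symm
    | succ k ih => rw [boundedPrefix_succ, ← ih]
  have hloss : ∀ k, μ (range f) ≤ μ (f '' P k) + ∑ i ∈ Finset.range k, (δ i : ℝ≥0∞) :=
      fun k => by
    induction k with
    | zero => simp [P, image_univ]
    | succ k ih =>
      calc μ (range f) ≤ μ (f '' P k) + ∑ i ∈ Finset.range k, (δ i : ℝ≥0∞) := ih
        _ ≤ μ (f '' P (k + 1)) + δ k + ∑ i ∈ Finset.range k, (δ i : ℝ≥0∞) := by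
          gcongr; exact hg k (P k)
        _ = μ (f '' P (k + 1)) + ∑ i ∈ Finset.range (k + 1), (δ i : ℝ≥0∞) := by
          rw [Finset.sum_range_succ]; ring
  refine ⟨N, fun k => ?_⟩
  calc μ (range f) ≤ μ (f '' P k) + ∑ i ∈ Finset.range k, (δ i : ℝ≥0∞) := hloss k
    _ ≤ μ (f '' boundedPrefix N k) + ε := by
      rw [hP]; gcongr; exact (ENNReal.sum_le_tsum _).trans hδε.le

theorem MeasureTheory.AnalyticSet.exists_isCompact_subset_measure_le_add {Y : Type*}
    [TopologicalSpace Y] [FirstCountableTopology Y] [T2Space Y] [MeasurableSpace Y]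
    [OpensMeasurableSpace Y] {s : Set Y} (hs : AnalyticSet s) (μ : Measure Y) [IsFiniteMeasure μ]
    {ε : ℝ≥0∞} (hε : ε ≠ 0) : ∃ K ⊆ s, IsCompact K ∧ μ s ≤ μ K + ε := by
  rw [AnalyticSet_def] at hs
  rcases hs with rfl | ⟨f, hf, rfl⟩
  · exact ⟨∅, subset_rfl, isCompact_empty, by simp⟩
  obtain ⟨N, hN⟩ := exists_forall_measure_range_le_image_boundedPrefix_add μ f hε
  refine ⟨f '' univ.pi (fun i => Iic (N i)), image_subset_range _ _,
    (isCompact_pi_Iic N).image hf, ?_⟩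
  have hanti : Antitone fun k => closure (f '' boundedPrefix N k) :=
    fun _ _ hkl => closure_mono (image_mono (boundedPrefix_antitone N hkl))
  calc μ (range f) ≤ (⨅ k, μ (closure (f '' boundedPrefix N k))) + ε := by
        rw [ENNReal.iInf_add]
        exact le_iInf fun k => (hN k).trans (by gcongr; exact subset_closure)
    _ = μ (⋂ k, closure (f '' boundedPrefix N k)) + ε := by
        rw [hanti.measure_iInter (fun _ => isClosed_closure.nullMeasurableSet)
          ⟨0, measure_ne_top μ _⟩]
    _ ≤ μ (f '' univ.pi fun i => Iic (N i)) + ε := by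
        gcongr
        exact fun y hy => hf.mem_image_pi_Iic_of_forall_mem_closure (mem_iInter.1 hy)

theorem MeasureTheory.AnalyticSet.nullMeasurableSet {Y : Type*} [TopologicalSpace Y]
    [FirstCountableTopology Y] [T2Space Y] [MeasurableSpace Y] [OpensMeasurableSpace Y]
    {s : Set Y} (hs : AnalyticSet s) (μ : Measure Y) [IsFiniteMeasure μ] :
    NullMeasurableSet s μ :=
  .of_forall_exists_measurableSet_subset (measure_ne_top μ s) fun _ hε =>
    let ⟨K, hKs, hK, hμK⟩ := hs.exists_isCompact_subset_measure_le_add μ hε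
    ⟨K, hKs, hK.measurableSet, hμK⟩

theorem ENat.measurable_of_measurableSet_setOf_natCast_le {α : Type*} [MeasurableSpace α]
    {f : α → ℕ∞} (h : ∀ n : ℕ, MeasurableSet {a | (n : ℕ∞) ≤ f a}) : Measurable f := by
  refine ENat.measurable_iff.2 fun n => ?_
  convert (h n).diff (h (n + 1)) using 1
  ext a
  simp only [mem_preimage, mem_singleton_iff, Set.mem_sdiff, Set.mem_ofPred_eq, Nat.cast_add,
    Nat.cast_one, ENat.add_one_le_iff (ENat.natCast_ne_top n), not_lt]
  exact ⟨fun h => ⟨h.ge, h.le⟩, fun h => le_antisymm h.2 h.1⟩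

universe u

theorem Set.natCast_le_encard_iff {α : Type u} {s : Set α} {n : ℕ} :
    (n : ℕ∞) ≤ s.encard ↔ ∃ v : Fin n → α, Function.Injective v ∧ ∀ i, v i ∈ s := by
  rw [← toENat_cardinalMk, Cardinal.natCast_le_toENat, ← Cardinal.lift_mk_fin.{u},
    ← Cardinal.lift_uzero (Cardinal.mk s), Cardinal.lift_mk_le']
  constructor
  · rintro ⟨e⟩
    exact ⟨fun i => e i, Subtype.val_injective.comp e.injective, fun i => (e i).2⟩
  · rintro ⟨v, hv, hvs⟩
    exact ⟨⟨fun i => ⟨v i, hvs i⟩, fun i j h => hv (congrArg Subtype.val h)⟩⟩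

theorem measurableSet_setOf_injective {ι X : Type*} [Countable ι] [MeasurableSpace X]
    [MeasurableEq X] : MeasurableSet {v : ι → X | Function.Injective v} :=
  measurableSet_setOfPred.2 <| Measurable.forall fun i => Measurable.forall fun j =>
    (Measurable.eq (measurable_pi_apply i) (measurable_pi_apply j)).imp measurable_const

theorem MeasureTheory.analyticSet_setOf_natCast_le_encard_preimage_inter
    {X : Type u} {Y : Type*}
    [TopologicalSpace X] [PolishSpace X] [MeasurableSpace X] [BorelSpace X]
    [TopologicalSpace Y] [PolishSpace Y] [MeasurableSpace Y] [BorelSpace Y]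
    {π : X → Y} (hπ : Measurable π) {A : Set X} (hA : MeasurableSet A) (n : ℕ) :
    AnalyticSet {y | (n : ℕ∞) ≤ (π ⁻¹' {y} ∩ A).encard} := by
  have hfiber : {y | (n : ℕ∞) ≤ (π ⁻¹' {y} ∩ A).encard} = Prod.fst ''
      {p : Y × (Fin n → X) | Function.Injective p.2 ∧ ∀ i, p.2 i ∈ π ⁻¹' {p.1} ∩ A} := by
    ext y
    simp [Set.natCast_le_encard_iff]
  rw [hfiber]
  refine MeasurableSet.analyticSet_image ?_ measurable_fst
  refine (measurableSet_setOf_injective.preimage measurable_snd).inter ?_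
  refine measurableSet_setOfPred.2 <|
    Measurable.forall fun i => (Measurable.eq ?_ measurable_fst).and ?_
  · exact hπ.comp ((measurable_pi_apply i).comp measurable_snd)
  · exact measurableSet_setOfPred.1 (hA.preimage ((measurable_pi_apply i).comp measurable_snd))

/-- For a Borel-measurable map `π` between Polish spaces and a Borel set
`A`, the map `y ↦ |π⁻¹(y) ∩ A|` is universally measurable, i.e. null-measurable with
respect to every Borel probability measure on `Y`. -/
theorem fiber_inter_card_universally_measurable
    {X Y : Type*} [TopologicalSpace X] [PolishSpace X] [MeasurableSpace X] [BorelSpace X]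
    [TopologicalSpace Y] [PolishSpace Y] [MeasurableSpace Y] [BorelSpace Y]
    (π : X → Y) (hπ : Measurable π) (A : Set X) (hA : MeasurableSet A) :
    ∀ μ : Measure Y, IsProbabilityMeasure μ →
      NullMeasurable (fun y => (π ⁻¹' {y} ∩ A).encard) μ := by
  intro μ _
  exact ENat.measurable_of_measurableSet_setOf_natCast_le (α := NullMeasurableSpace Y μ) fun n =>
    (analyticSet_setOf_natCast_le_encard_preimage_inter hπ hA n).nullMeasurableSet μ
end

section
/- Let T: X → X and S: Y → Y be homeomorphisms of compact metric spaces, π: X → Y a continuous surjection with π∘T = S∘π, and ν an ergodic S-invariant Borel probability measure on Y such that |π⁻¹(y)| = d for ν-a.e. y, where d ∈ ℕ is finite. Then there exists a degree joining over ν: an ergodic T×⋯×T-invariant Borel probability measure λ on X^d giving full measure to the set of tuples (x₁,…,x_d) with π(x₁) = ⋯ = π(x_d) and x₁,…,x_d pairwise distinct, and satisfying (π∘p_i)λ = ν for each coordinate projection p_i. -/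
/-!
Enumerate the fibres measurably: for a Borel embedding `e : X → ℝ`, the tuples listing a
`d`-point fibre in `e`-increasing order form a Borel set on which the base point is injective,
so by Lusin–Souslin they define a measurable map `F : Y → X^d`. Since `T` maps the fibre over
`y` onto the fibre over `S y`, there is a measurable cocycle `σ : Y → Sym(d)` with
`F (S y) ∘ σ y = T ∘ F y`. The skew product `(y, τ) ↦ (S y, σ y * τ)` preserves
`ν × uniform`. By ergodicity of `ν`, every invariant set has a.e. constant fibre measure, so
invariant sets take only finitely many measures, and conditioning on an invariant set of
minimal positive measure gives an ergodic measure with first marginal `ν`. Its image under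
`(y, τ) ↦ F y ∘ τ` is the required joining.
-/

open MeasureTheory Set Filter Function ProbabilityTheory
open scoped ENNReal

section Ergodic

variable {α β : Type*} [MeasurableSpace α] [MeasurableSpace β] {R : α → α} {μ : Measure α}

theorem MeasureTheory.MeasurePreserving.cond_of_preimage_eq (hR : MeasurePreserving R μ μ)
    {A : Set α} (hA : MeasurableSet A) (hRA : R ⁻¹' A = A) :
    MeasurePreserving R μ[|A] μ[|A] := by
  have := hR.restrict_preimage hA
  rw [hRA] at this
  exact ⟨hR.measurable, by rw [ProbabilityTheory.cond, Measure.map_smul, this.map_eq]⟩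

theorem Ergodic.map_of_ae_semiconj {T : β → β} {Ψ : α → β} (hR : Ergodic R μ)
    (hΨ : Measurable Ψ) (hT : Measurable T) (h : Ψ ∘ R =ᵐ[μ] T ∘ Ψ) :
    Ergodic T (μ.map Ψ) where
  toMeasurePreserving := ⟨hT, by
    rw [Measure.map_map hT hΨ, ← Measure.map_congr h, ← Measure.map_map hΨ hR.measurable,
      hR.map_eq]⟩
  aeconst_set s hs hTs := by
    have hΨμ : MeasurePreserving Ψ μ (μ.map Ψ) := ⟨hΨ, rfl⟩
    rw [← hΨμ.aeconst_preimage hs.nullMeasurableSet]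
    refine hR.quasiErgodic.aeconst_set₀ (hΨ hs).nullMeasurableSet ?_
    filter_upwards [h] with x hx
    change (Ψ (R x) ∈ s) = (Ψ x ∈ s)
    rw [show Ψ (R x) = T (Ψ x) from hx, ← Set.mem_preimage (f := T), hTs]

theorem MeasureTheory.MeasurePreserving.exists_ergodic_cond_of_finite_image_measure
    [IsFiniteMeasure μ] [NeZero μ] (hR : MeasurePreserving R μ μ)
    (hfin : (μ '' {A | MeasurableSet A ∧ R ⁻¹' A = A}).Finite) :
    ∃ A, MeasurableSet A ∧ R ⁻¹' A = A ∧ μ A ≠ 0 ∧ Ergodic R μ[|A] := by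
  obtain ⟨_, ⟨⟨A, ⟨hA, hRA⟩, rfl⟩, hA0⟩, hmin⟩ := Set.exists_min_image
    (μ '' {A | MeasurableSet A ∧ R ⁻¹' A = A} ∩ {m | m ≠ 0}) id (hfin.inter_of_left _)
    ⟨μ univ, ⟨univ, ⟨.univ, rfl⟩, rfl⟩, NeZero.ne _⟩
  refine ⟨A, hA, hRA, hA0, hR.cond_of_preimage_eq hA hRA, ⟨fun s hs hRs => ?_⟩⟩
  rw [eventuallyConst_set', ae_eq_empty, ae_eq_univ, cond_apply hA, cond_apply hA]
  by_cases h : μ (A ∩ s) = 0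
  · exact .inl (by rw [h, mul_zero])
  · -- `A ∩ s` is invariant, so by minimality of `μ A` it has full measure in `A`
    have hle : μ A ≤ μ (A ∩ s) :=
      hmin _ ⟨⟨A ∩ s, ⟨hA.inter hs, by rw [preimage_inter, hRs, hRA]⟩, rfl⟩, h⟩
    have hdiff : μ (A \ s) = 0 := by
      rw [ENNReal.eq_sub_of_add_eq (measure_ne_top _ _)
        ((add_comm _ _).trans (measure_inter_add_sdiff A hs)), tsub_eq_zero_of_le hle]
    exact .inr (by rw [← sdiff_eq, hdiff, mul_zero])

end Ergodic

section SkewProduct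

variable {Y G : Type*} [Group G]

def skewProduct (S : Y → Y) (σ : Y → G) (z : Y × G) : Y × G := (S z.1, σ z.1 * z.2)

variable [MeasurableSpace G] {S : Y → Y} {σ : Y → G}

theorem measure_preimage_skewProduct_section [MeasurableMul G] (η : Measure G)
    [η.IsMulLeftInvariant] (y : Y) (A : Set (Y × G)) :
    η (Prod.mk y ⁻¹' (skewProduct S σ ⁻¹' A)) = η (Prod.mk (S y) ⁻¹' A) :=
  measure_preimage_mul η (σ y) (Prod.mk (S y) ⁻¹' A)

variable [MeasurableSpace Y]

theorem measurable_skewProduct [DiscreteMeasurableSpace G] [Countable G] (hS : Measurable S)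
    (hσ : Measurable σ) : Measurable (skewProduct S σ) :=
  (hS.comp measurable_fst).prodMk <| measurable_from_prod_countable_left
    (f := fun z : Y × G => σ z.1 * z.2) fun g => (Measurable.of_discrete (f := (· * g))).comp hσ

variable (η : Measure G) [η.IsMulLeftInvariant] {ν : Measure Y}

theorem measurePreserving_skewProduct [DiscreteMeasurableSpace G] [Countable G] [SFinite ν]
    [SFinite η] (hS : MeasurePreserving S ν ν) (hσ : Measurable σ) :
    MeasurePreserving (skewProduct S σ) (ν.prod η) (ν.prod η) :=
  hS.skew_product (measurable_skewProduct hS.measurable hσ).snd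
    (ae_of_all _ fun y => map_mul_left_eq_self η (σ y))

variable [MeasurableMul G] [IsProbabilityMeasure ν] [IsProbabilityMeasure η]

theorem Ergodic.ae_measure_section_eq_of_preimage_skewProduct_eq (hS : Ergodic S ν)
    {A : Set (Y × G)} (hA : MeasurableSet A) (hRA : skewProduct S σ ⁻¹' A = A) :
    ∀ᵐ y ∂ν, η (Prod.mk y ⁻¹' A) = ν.prod η A := by
  have hinv : (fun y => η (Prod.mk y ⁻¹' A)) ∘ S = fun y => η (Prod.mk y ⁻¹' A) := by
    funext y
    rw [comp_apply, ← measure_preimage_skewProduct_section η (σ := σ), hRA]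
  obtain ⟨c, hc⟩ := hS.ae_eq_const_of_ae_eq_comp₀
    (measurable_measure_prodMk_left hA).nullMeasurable (EventuallyEq.of_eq hinv)
  rw [Measure.prod_apply hA, lintegral_congr_ae hc]
  simp only [const_apply, lintegral_const, measure_univ, mul_one]
  exact hc

theorem Ergodic.finite_measure_image_invariant_skewProduct [Finite G] (hS : Ergodic S ν) :
    (ν.prod η '' {A | MeasurableSet A ∧ skewProduct S σ ⁻¹' A = A}).Finite := by
  refine (finite_range fun B : Set G => η B).subset ?_
  rintro _ ⟨A, ⟨hA, hRA⟩, rfl⟩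
  obtain ⟨y, hy⟩ := (hS.ae_measure_section_eq_of_preimage_skewProduct_eq η hA hRA).exists
  exact ⟨_, hy⟩

theorem Ergodic.map_fst_cond_of_preimage_skewProduct_eq (hS : Ergodic S ν) {A : Set (Y × G)}
    (hA : MeasurableSet A) (hRA : skewProduct S σ ⁻¹' A = A) (hA0 : ν.prod η A ≠ 0) :
    (ν.prod η)[|A].map Prod.fst = ν := by
  ext B hB
  have hsec : ∀ᵐ y ∂ν, η (Prod.mk y ⁻¹' (A ∩ Prod.fst ⁻¹' B)) =
      B.indicator (fun _ => ν.prod η A) y := by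
    filter_upwards [hS.ae_measure_section_eq_of_preimage_skewProduct_eq η hA hRA] with y hy
    by_cases hyB : y ∈ B <;> simp [hyB, hy, preimage_inter, preimage_preimage]
  rw [Measure.map_apply measurable_fst hB, cond_apply hA,
    Measure.prod_apply (hA.inter (measurable_fst hB)), lintegral_congr_ae hsec,
    lintegral_indicator_const hB, ← mul_assoc, ENNReal.inv_mul_cancel hA0 (measure_ne_top _ _),
    one_mul]

end SkewProduct

theorem exists_measurable_eq_of_injOn_fst {α β : Type*} [MeasurableSpace α]
    [StandardBorelSpace α] [MeasurableSpace β] [StandardBorelSpace β] [Nonempty β]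
    {Z : Set (α × β)} (hZ : MeasurableSet Z) (hinj : InjOn Prod.fst Z) :
    ∃ G : α → β, Measurable G ∧ ∀ z ∈ Z, G z.1 = z.2 := by
  have := hZ.standardBorel
  obtain ⟨G, hGm, hG⟩ := ((measurable_fst.comp measurable_subtype_coe).measurableEmbedding
    hinj.injective).exists_measurable_extend (measurable_snd.comp measurable_subtype_coe)
    fun _ => inferInstance
  exact ⟨G, hGm, fun z hz => congr_fun hG ⟨z, hz⟩⟩

theorem Set.range_eq_of_injective_of_encard_eq {X : Type*} {d : ℕ} {x : Fin d → X} {s : Set X}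
    (hx : Injective x) (hsub : range x ⊆ s) (hs : s.encard = d) : range x = s :=
  (finite_of_encard_eq_coe hs).eq_of_subset_of_encard_le' hsub <| by
    rw [hs, ← image_univ, hx.encard_image, encard_univ, ENat.card_eq_coe_fintype_card,
      Fintype.card_fin]

theorem exists_strictMono_comp_range_eq {X β : Type*} [LinearOrder β] {e : X → β}
    (he : Injective e) {d : ℕ} {s : Set X} (hs : s.encard = d) :
    ∃ x : Fin d → X, StrictMono (e ∘ x) ∧ range x = s := by
  let := LinearOrder.lift' e he
  have hfin := finite_of_encard_eq_coe hs
  have hcard : hfin.toFinset.card = d := by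
    rw [← ENat.natCast_inj, ← encard_coe_eq_coe_finsetCard, Finite.coe_toFinset, hs]
  exact ⟨hfin.toFinset.orderEmbOfFin hcard, (hfin.toFinset.orderEmbOfFin hcard).strictMono,
    by rw [Finset.range_orderEmbOfFin, Finite.coe_toFinset]⟩

theorem exists_measurable_fiber_enumeration {X Y : Type*} [MeasurableSpace X]
    [StandardBorelSpace X] [MeasurableSpace Y] [StandardBorelSpace Y] {π : X → Y}
    (hπ : Measurable π) (ν : Measure Y) [NeZero ν] {d : ℕ}
    (hfib : ∀ᵐ y ∂ν, (π ⁻¹' {y}).encard = d) :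
    ∃ F : Y → Fin d → X, Measurable F ∧
      ∀ᵐ y ∂ν, Injective (F y) ∧ range (F y) = π ⁻¹' {y} := by
  set e := embeddingReal X
  have he := measurableEmbedding_embeddingReal X
  set Y₁ := (toMeasurable ν {y | (π ⁻¹' {y}).encard ≠ d})ᶜ
  have hY₁ : ∀ᵐ y ∂ν, y ∈ Y₁ :=
    compl_mem_ae_iff.2 (by rw [measure_toMeasurable]; exact hfib)
  have hY₁fib : ∀ y ∈ Y₁, (π ⁻¹' {y}).encard = d := fun y hy => by
    by_contra h
    exact hy (subset_toMeasurable _ _ h)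
  set Z := {z : Y × (Fin d → X) |
    z.1 ∈ Y₁ ∧ (∀ i, π (z.2 i) = z.1) ∧ StrictMono (e ∘ z.2)}
  have hZ_range : ∀ z ∈ Z, range z.2 = π ⁻¹' {z.1} := fun z hz =>
    range_eq_of_injective_of_encard_eq (hz.2.2.injective.of_comp)
      (by rintro _ ⟨i, rfl⟩; exact hz.2.1 i) (hY₁fib _ hz.1)
  have hZ_mem : ∀ y ∈ Y₁, ∃ x, (y, x) ∈ Z := fun y hy => by
    obtain ⟨x, hxe, hx⟩ := exists_strictMono_comp_range_eq he.injective (hY₁fib y hy)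
    exact ⟨x, hy, fun i => hx.subset ⟨i, rfl⟩, hxe⟩
  have hZ : MeasurableSet Z := by
    have hpt : ∀ i, Measurable fun z : Y × (Fin d → X) => z.2 i := fun i =>
      (measurable_pi_apply i).comp measurable_snd
    refine measurableSet_setOfPred.2 <|
      (measurable_fst (measurableSet_toMeasurable _ _).compl).mem.and
      (.and (.forall fun i => ?_) (.forall fun i => .forall fun j => .imp measurable_const ?_))
    · exact (measurableSet_eq_fun (hπ.comp (hpt i)) measurable_fst).mem
    · exact (measurableSet_lt (he.measurable.comp (hpt i)) (he.measurable.comp (hpt j))).mem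
  have hinj : InjOn Prod.fst Z := fun z hz z' hz' h => by
    refine Prod.ext h (funext fun i => he.injective (congr_fun (?_ : e ∘ z.2 = e ∘ z'.2) i))
    rw [← StrictMono.range_inj hz.2.2 hz'.2.2, range_comp, range_comp, hZ_range z hz,
      hZ_range z' hz', h]
  obtain ⟨y, hy⟩ := hY₁.exists
  have : Nonempty (Fin d → X) := ⟨(hZ_mem y hy).choose⟩
  obtain ⟨F, hFm, hF⟩ := exists_measurable_eq_of_injOn_fst hZ hinj
  refine ⟨F, hFm, ?_⟩
  filter_upwards [hY₁] with y hy
  obtain ⟨x, hx⟩ := hZ_mem y hy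
  rw [hF _ hx]
  exact ⟨hx.2.2.injective.of_comp, hZ_range _ hx⟩

instance Equiv.Perm.instMeasurableSpace {ι : Type*} : MeasurableSpace (Equiv.Perm ι) := ⊤

instance Equiv.Perm.instDiscreteMeasurableSpace {ι : Type*} :
    DiscreteMeasurableSpace (Equiv.Perm ι) :=
  ⟨fun _ => trivial⟩

theorem exists_perm_comp_eq {ι β : Type*} [Finite ι] {f g : ι → β} (hf : Injective f)
    (h : range f ⊆ range g) : ∃ τ : Equiv.Perm ι, ∀ i, g (τ i) = f i := by
  choose j hj using fun i => h ⟨i, rfl⟩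
  have hj_inj : Injective j := fun a b hab => hf (by rw [← hj a, ← hj b, hab])
  exact ⟨Equiv.ofBijective j hj_inj.bijective_of_finite, hj⟩

theorem exists_measurable_perm_forall_eq {Y ι β : Type*} [MeasurableSpace Y] [Finite ι]
    {f g : Y → ι → β} (hfg : ∀ i j, MeasurableSet {y | g y j = f y i}) :
    ∃ σ : Y → Equiv.Perm ι, Measurable σ ∧
      ∀ y, (∃ τ : Equiv.Perm ι, ∀ i, g y (τ i) = f y i) →
        ∀ i, g y (σ y i) = f y i := by
  classical
  let choosePerm (r : ι → ι → Prop) : Equiv.Perm ι :=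
    if h : ∃ τ : Equiv.Perm ι, ∀ i, r i (τ i) then h.choose else 1
  refine ⟨fun y => choosePerm fun i j => g y j = f y i,
    (measurable_of_finite choosePerm).comp <| measurable_pi_lambda _ fun i =>
      measurable_pi_lambda _ fun j => measurableSet_setOfPred.1 (hfg i j), fun y h => ?_⟩
  simp only [choosePerm, dif_pos h]
  exact h.choose_spec

instance {G : Type*} [Group G] [MeasurableSpace G] [MeasurableMul G] :
    (uniformOn (univ : Set G)).IsMulLeftInvariant := by
  rw [uniformOn, ProbabilityTheory.cond, Measure.restrict_univ]
  infer_instance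

theorem exists_ergodic_joining_of_fiber_enumeration {X Y : Type*} [MeasurableSpace X]
    [MeasurableSpace Y] {T : X → X} {S : Y → Y} {π : X → Y} {ν : Measure Y}
    [IsProbabilityMeasure ν] {d : ℕ} {F : Y → Fin d → X} {σ : Y → Equiv.Perm (Fin d)}
    (hT : Measurable T) (hπ : Measurable π) (hS : Ergodic S ν) (hFm : Measurable F)
    (hσm : Measurable σ) (hF : ∀ᵐ y ∂ν, Injective (F y) ∧ ∀ i, π (F y i) = y)
    (hσ : ∀ᵐ y ∂ν, ∀ i, F (S y) (σ y i) = T (F y i)) :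
    ∃ lam : Measure (Fin d → X), IsProbabilityMeasure lam ∧
      Ergodic (fun x i => T (x i)) lam ∧
      lam {x | (∀ i j, π (x i) = π (x j)) ∧ ∀ i j, i ≠ j → x i ≠ x j} = 1 ∧
      ∀ i : Fin d, lam.map (fun x => π (x i)) = ν := by
  set η : Measure (Equiv.Perm (Fin d)) := uniformOn univ
  have hR := measurePreserving_skewProduct η hS.toMeasurePreserving hσm
  obtain ⟨A, hA, hRA, hA0, herg⟩ :=
    hR.exists_ergodic_cond_of_finite_image_measure
      (hS.finite_measure_image_invariant_skewProduct η)
  set lamZ := (ν.prod η)[|A]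
  have := cond_isProbabilityMeasure hA0
  have hfst : lamZ.map Prod.fst = ν := hS.map_fst_cond_of_preimage_skewProduct_eq η hA hRA hA0
  have hgood : ∀ᵐ z ∂lamZ, (Injective (F z.1) ∧ ∀ i, π (F z.1 i) = z.1) ∧
      ∀ i, F (S z.1) (σ z.1 i) = T (F z.1 i) :=
    ae_of_ae_map measurable_fst.aemeasurable (hfst ▸ hF.and hσ)
  set Ψ : Y × Equiv.Perm (Fin d) → Fin d → X := fun z i => F z.1 (z.2 i)
  have hΨ : Measurable Ψ := measurable_pi_lambda _ fun i =>
    measurable_from_prod_countable_left (f := fun z => Ψ z i) fun τ =>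
      (measurable_pi_apply (τ i)).comp hFm
  refine ⟨lamZ.map Ψ, Measure.isProbabilityMeasure_map hΨ.aemeasurable,
    herg.map_of_ae_semiconj hΨ (measurable_pi_lambda _ fun i => hT.comp (measurable_pi_apply i))
      (hgood.mono fun z hz => funext fun i => hz.2 (z.2 i)), ?_, fun i => ?_⟩
  · set sep := {x : Fin d → X |
      (∀ i j, π (x i) = π (x j)) ∧ ∀ i j, i ≠ j → x i ≠ x j}
    have hsep : lamZ (Ψ ⁻¹' sep) = 1 := by
      rw [measure_congr (ae_eq_univ.2 ?_), measure_univ]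
      refine hgood.mono fun z hz => ⟨fun i j => by simp only [Ψ, hz.1.2], fun i j hij => ?_⟩
      exact fun h => hij (z.2.injective (hz.1.1 h))
    exact le_antisymm prob_le_one (hsep ▸ Measure.le_map_apply hΨ.aemeasurable sep)
  · rw [Measure.map_map (g := fun x => π (x i)) (by fun_prop) hΨ,
      Measure.map_congr (f := (fun x => π (x i)) ∘ Ψ) (g := Prod.fst)
        (hgood.mono fun z hz => hz.1.2 (z.2 i)), hfst]

theorem exists_degree_joining_general_general
    {X Y : Type*} [MetricSpace X] [CompactSpace X] [MetricSpace Y] [CompactSpace Y]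
    [MeasurableSpace X] [BorelSpace X] [MeasurableSpace Y] [BorelSpace Y]
    (T : X ≃ₜ X) (S : Y ≃ₜ Y) (π : X → Y)
    (hπc : Continuous π)
    (hcomm : π ∘ T = S ∘ π)
    (ν : Measure Y) [IsProbabilityMeasure ν] (hνerg : Ergodic S ν)
    (d : ℕ) (hfib : ∀ᵐ y ∂ν, (π ⁻¹' {y}).encard = d) :
    ∃ lam : Measure (Fin d → X), IsProbabilityMeasure lam ∧
      Ergodic (fun x i => T (x i)) lam ∧
      lam {x | (∀ i j, π (x i) = π (x j)) ∧ ∀ i j, i ≠ j → x i ≠ x j} = 1 ∧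
      ∀ i : Fin d, lam.map (fun x => π (x i)) = ν := by
  obtain ⟨F, hFm, hF⟩ := exists_measurable_fiber_enumeration hπc.measurable ν hfib
  obtain ⟨σ, hσm, hσ⟩ := exists_measurable_perm_forall_eq (f := fun y i => T (F y i))
    (g := fun y => F (S y)) fun i j => measurableSet_eq_fun
      (hFm.eval.comp S.continuous.measurable) (T.continuous.measurable.comp hFm.eval)
  refine exists_ergodic_joining_of_fiber_enumeration T.continuous.measurable hπc.measurable
    hνerg hFm hσm (hF.mono fun y hy => ⟨hy.1, fun i => hy.2.subset ⟨i, rfl⟩⟩) ?_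
  filter_upwards [hF, hνerg.quasiMeasurePreserving.ae hF] with y ⟨hinj, hrange⟩ hSy
  refine hσ y (exists_perm_comp_eq (T.injective.comp hinj) ?_)
  rintro _ ⟨i, rfl⟩
  rw [hSy.2]
  exact (congr_fun hcomm (F y i)).trans (congrArg S (hrange.subset ⟨i, rfl⟩))

/-- For a factor map between topological dynamical systems on compact
metric spaces and an ergodic measure `ν` on `Y` whose a.e. fiber has finite cardinality
`d`, there is a degree joining over `ν`: an ergodic `d`-fold separating relative joining
over `ν`. -/
theorem exists_degree_joining_general
    {X Y : Type*} [MetricSpace X] [CompactSpace X] [MetricSpace Y] [CompactSpace Y]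
    [MeasurableSpace X] [BorelSpace X] [MeasurableSpace Y] [BorelSpace Y]
    (T : X ≃ₜ X) (S : Y ≃ₜ Y) (π : X → Y)
    (hπc : Continuous π) (hπs : Function.Surjective π)
    (hcomm : π ∘ T = S ∘ π)
    (ν : Measure Y) [IsProbabilityMeasure ν] (hνerg : Ergodic S ν)
    (d : ℕ) (hd : 0 < d) (hfib : ∀ᵐ y ∂ν, (π ⁻¹' {y}).encard = d) :
    ∃ lam : Measure (Fin d → X), IsProbabilityMeasure lam ∧
      Ergodic (fun x i => T (x i)) lam ∧
      lam {x | (∀ i j, π (x i) = π (x j)) ∧ ∀ i j, i ≠ j → x i ≠ x j} = 1 ∧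
      ∀ i : Fin d, lam.map (fun x => π (x i)) = ν :=
  exists_degree_joining_general_general T S π hπc hcomm ν hνerg d hfib
end
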